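/- arXiv:2506.14123 — 2 statements merged into one kernel-verified Lean document; each statement's English description precedes it below -/
import Mathlib

section
/- For every token sequence T = [t₁, …, tₙ] ∈ Vⁿ, T is valid if and only if the pair [tᵢ, tᵢ₊₁] is valid for every i ∈ {1, …, n−1}. -/
/-!
Formalization of a BPE tokenizer with an ordered merge list.

* `σ` is the (finite) byte alphabet, `τ` is the (finite) vocabulary of tokens.
* `base` embeds each byte as a distinct base token.
* `dec` decodes a single token to a byte string; it is extended to token
  sequences by concatenation (`decodeSeq`).
* `merges` is the ordered merge list; each merge `(l, r, n)` replaces an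
  adjacent pair `(l, r)` by the single token `n`, and satisfies
  `dec n = dec l ++ dec r`.
* `encode` turns a byte string into its base tokens and then, processing the
  merges in order, repeatedly replaces the leftmost adjacent occurrence of
  `(l, r)` by `n` until no occurrence remains, before moving to the next merge.
-/

structure BPE (σ τ : Type*) where
  base : σ → τ
  dec : τ → List σ
  merges : List (τ × τ × τ)
  base_inj : Function.Injective base
  dec_base : ∀ b, dec (base b) = [b]
  dec_merge : ∀ m ∈ merges, dec m.2.2 = dec m.1 ++ dec m.2.1

namespace BPE

variable {σ τ : Type*} [DecidableEq τ]

/-- Decode a token sequence by concatenating the decodings of its tokens. -/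
def decodeSeq (B : BPE σ τ) (T : List τ) : List σ := (T.map B.dec).flatten

/-- Replace the leftmost adjacent occurrence of `(l, r)` by `n`, if any,
also returning the starting byte position of the replaced pair. -/
def replaceLeftmost (B : BPE σ τ) (l r n : τ) : List τ → Option (ℕ × List τ)
  | [] => none
  | [_] => none
  | t :: u :: rest =>
      if t = l ∧ u = r then some (0, n :: rest)
      else (B.replaceLeftmost l r n (u :: rest)).map
        (fun p => (p.1 + (B.dec t).length, t :: p.2))

/-- Repeatedly replace the leftmost adjacent occurrence of `(l, r)` by `n`
until no occurrence remains (the fuel, taken to be the length of the list,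
suffices since every replacement shortens the list).  Also returns the list
of byte positions at which replacements were performed, in order. -/
def runMerge (B : BPE σ τ) (l r n : τ) : ℕ → List τ → List τ × List ℕ
  | 0, T => (T, [])
  | fuel + 1, T =>
    match B.replaceLeftmost l r n T with
    | none => (T, [])
    | some (p, T') =>
      let q := B.runMerge l r n fuel T'
      (q.1, p :: q.2)

/-- Process an (indexed) list of merges in order, starting from token sequence
`T`; returns the final token sequence together with the ordered list of merge
applications performed, each recorded as a pair
(index of the merge in the merge list, starting byte position). -/
def encodeRunAux (B : BPE σ τ) : List (ℕ × τ × τ × τ) → List τ → List τ × List (ℕ × ℕ)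
  | [], T => (T, [])
  | (i, l, r, n) :: ms, T =>
    let q := B.runMerge l r n T.length T
    let q' := B.encodeRunAux ms q.1
    (q'.1, q.2.map (fun p => (i, p)) ++ q'.2)

/-- The full run of the BPE encoder on a byte string `S`: the final token
sequence together with the ordered list of merge applications performed. -/
def encodeRun (B : BPE σ τ) (S : List σ) : List τ × List (ℕ × ℕ) :=
  B.encodeRunAux (B.merges.zipIdx.map (fun p => (p.2, p.1))) (S.map B.base)

/-- BPE encoding of a byte string. -/
def encode (B : BPE σ τ) (S : List σ) : List τ := (B.encodeRun S).1

/-- The ordered list of merge applications (merge index, starting byte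
position) performed during the run of `encode` on `S`. -/
def encodeApps (B : BPE σ τ) (S : List σ) : List (ℕ × ℕ) := (B.encodeRun S).2

/-- A token sequence is *valid* if it is the canonical encoding of the byte
string it decodes to. -/
def Valid (B : BPE σ τ) (T : List τ) : Prop := B.encode (B.decodeSeq T) = T

/-- The merge list is in *normal form*:
(i) each token is produced by at most one merge;
(ii) every token `t` satisfies `encode (dec t) = [t]`;
(iii) every merge occurs later in the merge list than the merges producing
each of its two input tokens. -/
def NormalForm (B : BPE σ τ) : Prop :=
  (∀ i j (hi : i < B.merges.length) (hj : j < B.merges.length),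
      (B.merges[i]'hi).2.2 = (B.merges[j]'hj).2.2 → i = j) ∧
  (∀ t : τ, B.encode (B.dec t) = [t]) ∧
  (∀ i j (hi : i < B.merges.length) (hj : j < B.merges.length),
      (B.merges[i]'hi).2.2 = (B.merges[j]'hj).1 ∨
        (B.merges[i]'hi).2.2 = (B.merges[j]'hj).2.1 → i < j)

/-- The merge application `app = (t, p)` *crosses* byte position `c` if the
token it creates (the output of merge `t`, starting at byte position `p`)
has a byte span properly containing `c`. -/
def AppCrosses (B : BPE σ τ) (app : ℕ × ℕ) (c : ℕ) : Prop :=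
  ∃ h : app.1 < B.merges.length,
    app.2 < c ∧ c < app.2 + (B.dec (B.merges[app.1]'h).2.2).length

/-- Some merge applied during the run of `encode` on `S` crosses position `c`. -/
def MergeCrossesInRun (B : BPE σ τ) (S : List σ) (c : ℕ) : Prop :=
  ∃ app ∈ B.encodeApps S, B.AppCrosses app c

/-- The token sequence `U` contains a token whose byte span properly
contains position `c`. -/
def TokenCrosses (B : BPE σ τ) (U : List τ) (c : ℕ) : Prop :=
  ∃ k, k < U.length ∧
    (B.decodeSeq (U.take k)).length < c ∧ c < (B.decodeSeq (U.take (k + 1))).length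

end BPE
namespace BPE

variable {σ τ : Type*} [DecidableEq τ]

/-- The *Valid Covering Tree* of a byte string `P`: the set of all nonempty
token sequences `T = [t₁, …, tₙ]` such that (1) `P` is a prefix of
`decode T`, (2) `decode [t₁, …, t_{n-1}]` is a prefix of `P`, and
(3) `T` is valid. -/
def VCT (B : BPE σ τ) (P : List σ) : Set (List τ) :=
  {T | T ≠ [] ∧ P <+: B.decodeSeq T ∧ B.decodeSeq T.dropLast <+: P ∧ B.Valid T}

/-- The maximal prefix of a token sequence whose total decoded length is at
most `k`, i.e. the tokens whose byte spans end at or before position `k`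
(together with their spans, which are determined by the preceding tokens). -/
def spanPrefix (B : BPE σ τ) (k : ℕ) : List τ → List τ
  | [] => []
  | t :: T =>
      if (B.dec t).length ≤ k then t :: B.spanPrefix (k - (B.dec t).length) T
      else []

/-- `L₀` is a *lookahead bound* for the tokenizer if whenever two byte strings
agree on their first `k + L₀` bytes, the tokens of their encodings whose byte
spans end at or before position `k` coincide (with identical spans). -/
def LookaheadBound (B : BPE σ τ) (L₀ : ℕ) : Prop :=
  ∀ (x x' : List σ) (k : ℕ), x.take (k + L₀) = x'.take (k + L₀) →
    B.spanPrefix k (B.encode x) = B.spanPrefix k (B.encode x')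

/-- `U'` is the minimal covering prefix of `U` with respect to `P`: the
shortest prefix of `U` whose decoding has `P` as a prefix. -/
def IsMinCover (B : BPE σ τ) (P : List σ) (U U' : List τ) : Prop :=
  U' <+: U ∧ P <+: B.decodeSeq U' ∧
    ∀ U'' : List τ, U'' <+: U → P <+: B.decodeSeq U'' → U'.length ≤ U''.length

/-- The pair `(l, r)` occurs adjacently in `T`. -/
def PairAdj (l r : τ) (T : List τ) : Prop := ∃ A C, T = A ++ l :: r :: C

/-- The merge application `a = (t, i)` (merge index `t`, starting byte
position `i` of the left token) is applicable to the token sequence `T`. -/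
def Applicable (B : BPE σ τ) (a : ℕ × ℕ) (T : List τ) : Prop :=
  ∃ h : a.1 < B.merges.length, ∃ A C : List τ,
    T = A ++ (B.merges[a.1]'h).1 :: (B.merges[a.1]'h).2.1 :: C ∧
      (B.decodeSeq A).length = a.2

/-- `T'` is obtained from `T` by performing the merge application `a = (t, i)`:
the input pair of merge `t`, occurring adjacently in `T` with the left token
starting at byte position `i`, is replaced by the output token of merge `t`. -/
def ApplyApp (B : BPE σ τ) (a : ℕ × ℕ) (T T' : List τ) : Prop :=
  ∃ h : a.1 < B.merges.length, ∃ A C : List τ,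
    T = A ++ (B.merges[a.1]'h).1 :: (B.merges[a.1]'h).2.1 :: C ∧
      (B.decodeSeq A).length = a.2 ∧
      T' = A ++ (B.merges[a.1]'h).2.2 :: C

/-- Lexicographic order on merge applications `(t, i)`. -/
def appLE (a a' : ℕ × ℕ) : Prop :=
  a.1 < a'.1 ∨ (a.1 = a'.1 ∧ a.2 ≤ a'.2)

/-- `GreedyChain B T₀ apps T` holds when the sequence of merge applications
`apps` leads from token sequence `T₀` to token sequence `T`, and each applied
application is lexicographically least among those applicable to the current
token sequence. -/
inductive GreedyChain (B : BPE σ τ) : List τ → List (ℕ × ℕ) → List τ → Prop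
  | nil (T : List τ) : GreedyChain B T [] T
  | cons {T T' Tf : List τ} {a : ℕ × ℕ} {apps : List (ℕ × ℕ)} :
      B.ApplyApp a T T' →
      (∀ a', B.Applicable a' T → appLE a a') →
      GreedyChain B T' apps Tf →
      GreedyChain B T (a :: apps) Tf

end BPE

/-!
Normal form forces every token to decode to a nonempty string (as `encode [] = []`), so no
merge outputs one of its own inputs, and running a merge `(l, r) ↦ n` to exhaustion, always at
the leftmost occurrence, is a single left-to-right sweep; `encode` is a composite of sweeps.
A sweep of `U ++ V` is the sweep of `U` followed by the sweep of `V`, unless it merges the last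
token of the former with the first token of `V`; then the junction lies strictly inside a token,
and it stays so, because later sweeps only remove token boundaries. So if `encode (S₁ ++ S₂)` has
a token boundary after `S₁`, no merge ever crossed the junction and `S₁`, `S₂` were encoded
independently: validity passes to the two halves of a valid sequence. Conversely, whether a
junction is crossed depends only on the tokens next to it, so valid sequences `T ++ [t]` and
`t :: U` glue to a valid `T ++ t :: U`, and induction along the sequence gives the theorem.
-/

namespace BPE

section decode

variable {σ τ : Type*} (B : BPE σ τ)

@[simp] lemma decodeSeq_nil : B.decodeSeq [] = [] := rfl

@[simp] lemma decodeSeq_cons (t : τ) (T : List τ) :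
    B.decodeSeq (t :: T) = B.dec t ++ B.decodeSeq T := by
  simp [decodeSeq]

@[simp] lemma decodeSeq_append (T U : List τ) :
    B.decodeSeq (T ++ U) = B.decodeSeq T ++ B.decodeSeq U := by
  simp [decodeSeq]

@[simp] lemma decodeSeq_map_base (S : List σ) : B.decodeSeq (S.map B.base) = S := by
  induction S with
  | nil => rfl
  | cons s S ih => simp [B.dec_base, ih]

def IsBoundary (c : ℕ) (T : List τ) : Prop :=
  ∃ P Q, T = P ++ Q ∧ (B.decodeSeq P).length = c

variable {B}

lemma decodeSeq_eq_nil_iff (hdec : ∀ t, B.dec t ≠ []) {T : List τ} :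
    B.decodeSeq T = [] ↔ T = [] := by
  cases T <;> simp [hdec]

lemma append_inj_of_decodeSeq_length (hdec : ∀ t, B.dec t ≠ []) {T₁ U₁ T₂ U₂ : List τ}
    (h : T₁ ++ U₁ = T₂ ++ U₂) (hl : (B.decodeSeq T₁).length = (B.decodeSeq T₂).length) :
    T₁ = T₂ ∧ U₁ = U₂ := by
  rcases List.append_eq_append_iff.mp h with ⟨A, rfl, rfl⟩ | ⟨A, rfl, rfl⟩ <;>
  · obtain rfl : A = [] := (decodeSeq_eq_nil_iff hdec).mp (by simpa using hl)
    simp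

lemma ne_of_mem_merges (hdec : ∀ t, B.dec t ≠ []) {l r n : τ} (hm : (l, r, n) ∈ B.merges) :
    n ≠ l ∧ n ≠ r := by
  have hm := B.dec_merge _ hm
  constructor <;> rintro rfl
  · exact hdec r (by simpa using hm)
  · exact hdec l (by simpa using hm)

lemma isBoundary_zero (T : List τ) : B.IsBoundary 0 T := ⟨[], T, rfl, rfl⟩

lemma isBoundary_cons_iff {c : ℕ} {t : τ} {T : List τ} :
    B.IsBoundary c (t :: T) ↔
      c = 0 ∨ (B.dec t).length ≤ c ∧ B.IsBoundary (c - (B.dec t).length) T := by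
  constructor
  · rintro ⟨_ | ⟨p, P⟩, Q, hT, rfl⟩
    · exact .inl rfl
    · obtain ⟨rfl, rfl⟩ := List.cons_eq_cons.mp hT
      right
      simp only [decodeSeq_cons, List.length_append, le_add_iff_nonneg_right, zero_le,
        add_tsub_cancel_left, true_and]
      exact ⟨P, Q, rfl, rfl⟩
  · rintro (rfl | ⟨hc, P, Q, rfl, hP⟩)
    · exact isBoundary_zero _
    · exact ⟨t :: P, Q, rfl, by simp only [decodeSeq_cons, List.length_append]; omega⟩

lemma IsBoundary.of_append_left {c : ℕ} {W T : List τ}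
    (h : B.IsBoundary ((B.decodeSeq W).length + c) (W ++ T)) : B.IsBoundary c T := by
  induction W with
  | nil => simpa using h
  | cons w W ih =>
    rcases isBoundary_cons_iff.mp h with hc | ⟨-, h⟩
    · simp_all [isBoundary_zero]
    · apply ih
      simpa [Nat.add_assoc] using h

end decode

section mergePass

variable {τ : Type*} [DecidableEq τ]

-- For `n ∉ {l, r}` this is the leftmost-first exhaustive replacement performed by `runMerge`.
def mergePass (l r n : τ) : List τ → List τ
  | [] => []
  | [t] => [t]
  | t :: u :: rest =>
      if t = l ∧ u = r then n :: mergePass l r n rest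
      else t :: mergePass l r n (u :: rest)

def mergePasses : List (τ × τ × τ) → List τ → List τ
  | [], T => T
  | (l, r, n) :: ms, T => mergePasses ms (mergePass l r n T)

def MergesAcross (l r n : τ) (U V : List τ) : Prop :=
  (mergePass l r n U).getLast? = some l ∧ V.head? = some r

def NoMergeAcross : List (τ × τ × τ) → List τ → List τ → Prop
  | [], _, _ => True
  | (l, r, n) :: ms, U, V =>
      ¬ MergesAcross l r n U V ∧ NoMergeAcross ms (mergePass l r n U) (mergePass l r n V)

variable {l r n : τ}

lemma mergePass_cons_cons (t u : τ) (rest : List τ) :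
    mergePass l r n (t :: u :: rest) =
      if t = l ∧ u = r then n :: mergePass l r n rest
      else t :: mergePass l r n (u :: rest) := rfl

lemma mergePass_cons {t : τ} {T : List τ} (h : ¬ (t = l ∧ T.head? = some r)) :
    mergePass l r n (t :: T) = t :: mergePass l r n T := by
  cases T with
  | nil => rfl
  | cons u T => simp_all [mergePass_cons_cons]

lemma mergePass_ne_nil : ∀ {T : List τ}, T ≠ [] → mergePass l r n T ≠ []
  | [_], _ => List.cons_ne_nil _ _
  | t :: u :: rest, _ => by rw [mergePass_cons_cons]; split <;> simp

lemma mergePass_append {U V : List τ} (h : ¬ MergesAcross l r n U V) :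
    mergePass l r n (U ++ V) = mergePass l r n U ++ mergePass l r n V := by
  unfold MergesAcross at h
  fun_induction mergePass l r n U with
  | case1 => rfl
  | case2 t =>
    cases V with
    | nil => rfl
    | cons v V => simp_all [mergePass_cons_cons]
  | case3 t u rest hlr ih =>
    rw [List.cons_append, List.cons_append, mergePass_cons_cons, if_pos hlr]
    rcases eq_or_ne rest [] with rfl | hrest
    · rfl
    · rw [List.getLast?_cons_of_ne_nil (mergePass_ne_nil hrest)] at h
      rw [ih h, List.cons_append]
  | case4 t u rest hlr ih =>
    rw [List.cons_append, List.cons_append, mergePass_cons_cons, if_neg hlr, ← List.cons_append,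
      ih, List.cons_append]
    rwa [List.getLast?_cons_of_ne_nil (mergePass_ne_nil (List.cons_ne_nil _ _))] at h

lemma mergePass_append_cons_of_eq_append_singleton (hnl : n ≠ l) {U W : List τ}
    (h : mergePass l r n U = W ++ [l]) (V : List τ) :
    mergePass l r n (U ++ r :: V) = W ++ n :: mergePass l r n V := by
  fun_induction mergePass l r n U generalizing W with
  | case1 => simp at h
  | case2 t =>
    rcases List.cons_eq_append_iff.mp h with ⟨rfl, hW⟩ | ⟨W, rfl, hW⟩
    · obtain rfl : t = l := (List.cons_eq_cons.mp hW).1.symm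
      simp [mergePass_cons_cons]
    · simp at hW
  | case3 t u rest hlr ih =>
    rw [List.cons_append, List.cons_append, mergePass_cons_cons, if_pos hlr]
    rcases List.cons_eq_append_iff.mp h with ⟨-, hW⟩ | ⟨W, rfl, hW⟩
    · exact absurd (List.cons_eq_cons.mp hW).1.symm hnl
    · rw [ih hW, List.cons_append]
  | case4 t u rest hlr ih =>
    rw [List.cons_append, List.cons_append, mergePass_cons_cons, if_neg hlr, ← List.cons_append]
    rcases List.cons_eq_append_iff.mp h with ⟨-, hW⟩ | ⟨W, rfl, hW⟩
    · exact absurd (List.cons_eq_cons.mp hW).2.symm (mergePass_ne_nil (List.cons_ne_nil _ _))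
    · rw [ih hW, List.cons_append]

lemma mergePasses_append :
    ∀ {ms : List (τ × τ × τ)} {U V : List τ}, NoMergeAcross ms U V →
      mergePasses ms (U ++ V) = mergePasses ms U ++ mergePasses ms V
  | [], _, _, _ => rfl
  | (_, _, _) :: _, _, _, ⟨h, hms⟩ => by
    rw [mergePasses, mergePass_append h]
    exact mergePasses_append hms

lemma NoMergeAcross.append_right :
    ∀ {ms : List (τ × τ × τ)} {U V W : List τ}, NoMergeAcross ms U V → NoMergeAcross ms V W →
      V ≠ [] → NoMergeAcross ms U (V ++ W)
  | [], _, _, _, _, _, _ => trivial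
  | (_, _, _) :: _, _, V, _, ⟨hUV, hUV'⟩, ⟨hVW, hVW'⟩, hV => by
    refine ⟨?_, ?_⟩
    · rwa [MergesAcross, List.head?_append_of_ne_nil _ hV]
    · rw [mergePass_append hVW]
      exact hUV'.append_right hVW' (mergePass_ne_nil hV)

end mergePass

variable {σ τ : Type*} [DecidableEq τ] (B : BPE σ τ) {l r n : τ}

lemma decodeSeq_mergePass (hm : B.dec n = B.dec l ++ B.dec r) (T : List τ) :
    B.decodeSeq (mergePass l r n T) = B.decodeSeq T := by
  fun_induction mergePass l r n T <;> simp_all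

lemma decodeSeq_mergePasses :
    ∀ {ms : List (τ × τ × τ)}, (∀ m ∈ ms, B.dec m.2.2 = B.dec m.1 ++ B.dec m.2.1) →
      ∀ T : List τ, B.decodeSeq (mergePasses ms T) = B.decodeSeq T
  | [], _, _ => rfl
  | (_, _, _) :: _, hms, T => by
    rw [mergePasses, decodeSeq_mergePasses (fun m hm => hms m (.tail _ hm)),
      B.decodeSeq_mergePass (hms _ List.mem_cons_self)]

variable {B}

lemma IsBoundary.of_mergePass {c : ℕ} (hm : B.dec n = B.dec l ++ B.dec r)
    {T : List τ} (h : B.IsBoundary c (mergePass l r n T)) : B.IsBoundary c T := by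
  fun_induction mergePass l r n T generalizing c with
  | case3 t u rest hlr ih =>
    obtain ⟨rfl, rfl⟩ := hlr
    rcases isBoundary_cons_iff.mp h with rfl | ⟨hc, h⟩
    · exact isBoundary_zero _
    · have hn : (B.dec n).length = (B.dec t).length + (B.dec u).length := by simp [hm]
      refine isBoundary_cons_iff.mpr <| .inr
        ⟨by omega, isBoundary_cons_iff.mpr <| .inr ⟨by omega, ?_⟩⟩
      rw [Nat.sub_sub, ← hn]
      exact ih h
  | case4 t u rest hlr ih =>
    rcases isBoundary_cons_iff.mp h with rfl | ⟨hc, h⟩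
    · exact isBoundary_zero _
    · exact isBoundary_cons_iff.mpr (.inr ⟨hc, ih h⟩)
  | _ => exact h

lemma IsBoundary.of_mergePasses {c : ℕ} :
    ∀ {ms : List (τ × τ × τ)}, (∀ m ∈ ms, B.dec m.2.2 = B.dec m.1 ++ B.dec m.2.1) →
      ∀ {T : List τ}, B.IsBoundary c (mergePasses ms T) → B.IsBoundary c T
  | [], _, _, h => h
  | (_, _, _) :: _, hms, _, h =>
    (IsBoundary.of_mergePasses (fun m hm => hms m (.tail _ hm)) h).of_mergePass
      (hms _ List.mem_cons_self)

lemma not_isBoundary_of_mergesAcross (hdec : ∀ t, B.dec t ≠ [])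
    (hm : B.dec n = B.dec l ++ B.dec r) {U V : List τ} (h : MergesAcross l r n U V) :
    ¬ B.IsBoundary (B.decodeSeq U).length (mergePass l r n (U ++ V)) := by
  obtain ⟨W, hW⟩ := List.getLast?_eq_some_iff.mp h.1
  obtain ⟨V, rfl⟩ := List.head?_eq_some_iff.mp h.2
  have hnl : n ≠ l := by
    rintro rfl
    exact hdec r (by simpa using hm)
  have hU : (B.decodeSeq U).length = (B.decodeSeq W).length + (B.dec l).length := by
    rw [← B.decodeSeq_mergePass hm U, hW]
    simp
  rw [mergePass_append_cons_of_eq_append_singleton hnl hW, hU]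
  intro hb
  rcases isBoundary_cons_iff.mp hb.of_append_left with hl | ⟨hle, -⟩
  · exact hdec l (List.length_eq_zero_iff.mp hl)
  · rw [hm, List.length_append] at hle
    exact hdec r (List.length_eq_zero_iff.mp (by omega))

lemma noMergeAcross_of_isBoundary (hdec : ∀ t, B.dec t ≠ []) :
    ∀ {ms : List (τ × τ × τ)}, (∀ m ∈ ms, B.dec m.2.2 = B.dec m.1 ++ B.dec m.2.1) →
      ∀ {U V : List τ}, B.IsBoundary (B.decodeSeq U).length (mergePasses ms (U ++ V)) →
        NoMergeAcross ms U V
  | [], _, _, _, _ => trivial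
  | (l, r, n) :: ms, hms, U, V, h => by
    have hm := hms _ List.mem_cons_self
    have hms' : ∀ m ∈ ms, B.dec m.2.2 = B.dec m.1 ++ B.dec m.2.1 :=
      fun m hm => hms m (.tail _ hm)
    rw [mergePasses] at h
    have hcross : ¬ MergesAcross l r n U V := fun hc =>
      not_isBoundary_of_mergesAcross hdec hm hc (h.of_mergePasses hms')
    refine ⟨hcross, noMergeAcross_of_isBoundary hdec hms' ?_⟩
    rwa [← mergePass_append hcross, B.decodeSeq_mergePass hm]

lemma mergePass_eq_self_of_replaceLeftmost_eq_none {T : List τ}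
    (h : B.replaceLeftmost l r n T = none) : mergePass l r n T = T := by
  fun_induction B.replaceLeftmost l r n T with
  | case3 => simp at h
  | case4 t u rest hlr ih =>
    rw [mergePass_cons_cons, if_neg hlr, ih (Option.map_eq_none_iff.mp h)]
  | _ => rfl

lemma length_of_replaceLeftmost_eq_some {T T' : List τ} {p : ℕ}
    (h : B.replaceLeftmost l r n T = some (p, T')) : T.length = T'.length + 1 := by
  fun_induction B.replaceLeftmost l r n T generalizing p T' with
  | case3 =>
    obtain ⟨-, rfl⟩ := Prod.mk.inj (Option.some.inj h)
    rfl
  | case4 t u rest hlr ih =>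
    obtain ⟨⟨p', T''⟩, h', hT'⟩ := Option.map_eq_some_iff.mp h
    obtain ⟨-, rfl⟩ := Prod.mk.inj hT'
    rw [List.length_cons, ih h', List.length_cons]
  | _ => simp at h

lemma head?_of_replaceLeftmost_eq_some {t : τ} {T T' : List τ} {p : ℕ}
    (h : B.replaceLeftmost l r n (t :: T) = some (p, T')) :
    T'.head? = some t ∨ T'.head? = some n := by
  cases T with
  | nil => simp [replaceLeftmost] at h
  | cons u T =>
    rw [replaceLeftmost] at h
    split at h
    · obtain ⟨-, rfl⟩ := Prod.mk.inj (Option.some.inj h)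
      simp
    · obtain ⟨_, -, h⟩ := Option.map_eq_some_iff.mp h
      obtain ⟨-, rfl⟩ := Prod.mk.inj h
      simp

lemma mergePass_eq_of_replaceLeftmost_eq_some (hnl : n ≠ l) (hnr : n ≠ r)
    {T T' : List τ} {p : ℕ} (h : B.replaceLeftmost l r n T = some (p, T')) :
    mergePass l r n T' = mergePass l r n T := by
  fun_induction B.replaceLeftmost l r n T generalizing p T' with
  | case3 t u rest hlr =>
    obtain ⟨-, rfl⟩ := Prod.mk.inj (Option.some.inj h)
    rw [mergePass_cons (by simp [hnl]), mergePass_cons_cons, if_pos hlr]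
  | case4 t u rest hlr ih =>
    obtain ⟨⟨p', T''⟩, h', hT'⟩ := Option.map_eq_some_iff.mp h
    obtain ⟨-, rfl⟩ := Prod.mk.inj hT'
    have hhead : ¬ (t = l ∧ T''.head? = some r) := by
      rcases head?_of_replaceLeftmost_eq_some h' with hu | hn
      · simpa [hu] using hlr
      · simp [hn, hnr]
    rw [mergePass_cons hhead, mergePass_cons_cons, if_neg hlr, ih h']
  | _ => simp at h

lemma runMerge_fst (hnl : n ≠ l) (hnr : n ≠ r) :
    ∀ {fuel : ℕ} {T : List τ}, T.length ≤ fuel →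
      (B.runMerge l r n fuel T).1 = mergePass l r n T
  | 0, [], _ => rfl
  | fuel + 1, T, hT => by
    rw [runMerge]
    rcases h : B.replaceLeftmost l r n T with _ | ⟨p, T'⟩
    · exact (mergePass_eq_self_of_replaceLeftmost_eq_none h).symm
    · have hT' : T'.length ≤ fuel := by
        have := length_of_replaceLeftmost_eq_some h
        omega
      rw [runMerge_fst hnl hnr hT', mergePass_eq_of_replaceLeftmost_eq_some hnl hnr h]

lemma encodeRunAux_fst (hdec : ∀ t, B.dec t ≠ []) :
    ∀ {ims : List (ℕ × τ × τ × τ)}, (∀ q ∈ ims, q.2 ∈ B.merges) →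
      ∀ T : List τ, (B.encodeRunAux ims T).1 = mergePasses (ims.map Prod.snd) T
  | [], _, _ => rfl
  | (_, _, _, _) :: _, hims, T => by
    obtain ⟨hnl, hnr⟩ := ne_of_mem_merges hdec (hims _ List.mem_cons_self)
    rw [encodeRunAux, encodeRunAux_fst hdec (fun q hq => hims q (.tail _ hq)),
      runMerge_fst hnl hnr le_rfl]
    rfl

lemma encode_eq_mergePasses (hdec : ∀ t, B.dec t ≠ []) (S : List σ) :
    B.encode S = mergePasses B.merges (S.map B.base) := by
  have hmem : ∀ q ∈ B.merges.zipIdx.map (fun p => (p.2, p.1)), q.2 ∈ B.merges := by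
    simp only [List.mem_map]
    rintro _ ⟨p, hp, rfl⟩
    exact List.fst_mem_of_mem_zipIdx hp
  rw [encode, encodeRun, encodeRunAux_fst hdec hmem, List.map_map]
  exact congrArg (mergePasses · _) (List.zipIdx_map_fst 0 B.merges)

lemma encode_nil : B.encode [] = [] := by
  suffices ∀ ims : List (ℕ × τ × τ × τ), B.encodeRunAux ims [] = ([], []) by
    simp [encode, encodeRun, this]
  intro ims
  induction ims with
  | nil => rfl
  | cons q ims ih => simp [encodeRunAux, runMerge, ih]

lemma valid_iff (hdec : ∀ t, B.dec t ≠ []) {T : List τ} :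
    B.Valid T ↔ mergePasses B.merges ((B.decodeSeq T).map B.base) = T := by
  rw [Valid, encode_eq_mergePasses hdec]

lemma noMergeAcross_of_valid_append (hdec : ∀ t, B.dec t ≠ []) {T U : List τ}
    (h : B.Valid (T ++ U)) :
    NoMergeAcross B.merges ((B.decodeSeq T).map B.base) ((B.decodeSeq U).map B.base) := by
  rw [valid_iff hdec, decodeSeq_append, List.map_append] at h
  refine noMergeAcross_of_isBoundary hdec B.dec_merge ?_
  rw [h, decodeSeq_map_base]
  exact ⟨T, U, rfl, rfl⟩

lemma Valid.of_append (hdec : ∀ t, B.dec t ≠ []) {T U : List τ} (h : B.Valid (T ++ U)) :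
    B.Valid T ∧ B.Valid U := by
  have hsplit := mergePasses_append (noMergeAcross_of_valid_append hdec h)
  rw [valid_iff hdec, decodeSeq_append, List.map_append, hsplit] at h
  rw [valid_iff hdec, valid_iff hdec]
  refine append_inj_of_decodeSeq_length hdec h ?_
  rw [B.decodeSeq_mergePasses B.dec_merge, decodeSeq_map_base]

lemma Valid.glue (hdec : ∀ t, B.dec t ≠ []) {T U : List τ} {t : τ} (hT : B.Valid (T ++ [t]))
    (hU : B.Valid (t :: U)) : B.Valid (T ++ t :: U) := by
  have hX := noMergeAcross_of_valid_append hdec hT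
  have hY := noMergeAcross_of_valid_append hdec (T := [t]) hU
  have hXY := hX.append_right hY (by simpa using hdec t)
  rw [← List.map_append, ← decodeSeq_append, List.singleton_append] at hXY
  rw [valid_iff hdec] at hU ⊢
  rw [decodeSeq_append, List.map_append, mergePasses_append hXY, hU,
    (valid_iff hdec).mp (hT.of_append hdec).1]

lemma dec_ne_nil_of_normalForm (hNF : B.NormalForm) (t : τ) : B.dec t ≠ [] := fun h => by
  simpa [h, encode_nil] using hNF.2.1 t

lemma valid_singleton_of_normalForm (hNF : B.NormalForm) (t : τ) : B.Valid [t] := by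
  simpa [Valid] using hNF.2.1 t

theorem valid_iff_isChain (hNF : B.NormalForm) :
    ∀ T : List τ, B.Valid T ↔ T.IsChain (fun a b => B.Valid [a, b])
  | [] => by simp [Valid, encode_nil]
  | [t] => by simpa using valid_singleton_of_normalForm hNF t
  | a :: b :: T => by
    have hdec := dec_ne_nil_of_normalForm hNF
    rw [List.isChain_cons_cons, ← valid_iff_isChain hNF (b :: T)]
    refine ⟨fun h => ⟨?_, ?_⟩, fun ⟨hab, hbT⟩ => Valid.glue hdec (T := [a]) hab hbT⟩
    · exact (Valid.of_append hdec (T := [a, b]) h).1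
    · exact (Valid.of_append hdec (T := [a]) h).2

end BPE

/-- **Pairwise validity.** For every token sequence `T = [t₁, …, tₙ]`, `T` is
valid if and only if the pair `[tᵢ, tᵢ₊₁]` is valid for every
`i ∈ {1, …, n−1}`. -/
theorem BPE.valid_iff_pairwise_valid {σ τ : Type*} [DecidableEq τ]
    (B : BPE σ τ) (hNF : B.NormalForm) (T : List τ) :
    B.Valid T ↔
      ∀ (i : ℕ) (h : i + 1 < T.length),
        B.Valid [T[i]'(Nat.lt_of_succ_lt h), T[i + 1]'h] := by
  rw [B.valid_iff_isChain hNF, List.isChain_iff_getElem]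
end

section
/- Let T be a token sequence over V in which no merge of index strictly less than t is applicable (i.e., for every merge m⁽ˢ⁾ = (l, r, n) with s < t, the pair (l, r) does not occur adjacently in T). If T′ is obtained from T by replacing one adjacent occurrence of the input pair of the merge m⁽ᵗ⁾ by its output token, then no merge of index strictly less than t is applicable to T′; in particular, every newly created adjacent pair in T′ involves the output token of m⁽ᵗ⁾, which by normal form can only participate in merges of index greater than t. -/
/-!
By the ordering condition (iii) of normal form, the output token `n` of merge `t` is an input
token only of merges of index greater than `t`. So an input pair of an earlier merge occurring in
`A ++ n :: C` does not involve `n`; it therefore lies inside `A` or inside `C`, and hence already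
occurs in `A ++ l :: r :: C`.
-/

namespace BPE

section PairAdj

variable {τ : Type*} {l r n : τ} {T T' A C : List τ}

theorem pairAdj_iff_infix : PairAdj l r T ↔ [l, r] <:+: T := by
  simp [PairAdj, List.IsInfix, eq_comm]

theorem PairAdj.mono (h : PairAdj l r T) (hT : T <:+: T') : PairAdj l r T' :=
  pairAdj_iff_infix.mpr ((pairAdj_iff_infix.mp h).trans hT)

theorem PairAdj.left_or_right_of_append_cons (h : PairAdj l r (A ++ n :: C))
    (hl : n ≠ l) (hr : n ≠ r) : PairAdj l r A ∨ PairAdj l r C := by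
  simp only [pairAdj_iff_infix] at h ⊢
  rcases List.infix_append_iff_ne_nil.mp h with hA | hnC | ⟨l₁, l₂, hl₁, hl₂, hsplit, -, hpre⟩
  · exact Or.inl hA
  · rcases List.infix_cons_iff.mp hnC with ⟨_, hpre⟩ | hC
    · exact absurd (List.cons.inj hpre).1 hl.symm
    · exact Or.inr hC
  · -- the pair straddles the boundary, so its right token is `n`
    obtain rfl : l₂ = [r] := by
      rcases l₁ with _ | ⟨_, _ | _⟩ <;> simp_all
    obtain ⟨_, hpre⟩ := hpre
    exact absurd (List.cons.inj hpre).1 hr.symm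

end PairAdj

theorem NormalForm.output_ne_inputs_of_lt {σ τ : Type*} [DecidableEq τ] {B : BPE σ τ}
    (hNF : B.NormalForm) {s t : ℕ} (hs : s < B.merges.length) (ht : t < B.merges.length)
    (hst : s < t) :
    (B.merges[t]'ht).2.2 ≠ (B.merges[s]'hs).1 ∧ (B.merges[t]'ht).2.2 ≠ (B.merges[s]'hs).2.1 :=
  ⟨fun h => (hNF.2.2 t s ht hs (Or.inl h)).not_gt hst,
    fun h => (hNF.2.2 t s ht hs (Or.inr h)).not_gt hst⟩

end BPE

/-- Let `T` be a token sequence in which no merge of index strictly less than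
`t` is applicable (i.e. for every merge `m⁽ˢ⁾ = (l, r, n)` with `s < t`, the
pair `(l, r)` does not occur adjacently in `T`).  If `T'` is obtained from `T`
by replacing one adjacent occurrence of the input pair of the merge `m⁽ᵗ⁾` by
its output token, then no merge of index strictly less than `t` is applicable
to `T'`. -/
theorem BPE.no_earlier_merge_applicable_after_merge {σ τ : Type*}
    [DecidableEq τ] (B : BPE σ τ) (hNF : B.NormalForm)
    (T : List τ) (t : ℕ) (ht : t < B.merges.length)
    (hsmall : ∀ s (hs : s < B.merges.length), s < t →
      ¬ BPE.PairAdj (B.merges[s]'hs).1 (B.merges[s]'hs).2.1 T)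
    (A C : List τ)
    (hT : T = A ++ (B.merges[t]'ht).1 :: (B.merges[t]'ht).2.1 :: C) :
    ∀ s (hs : s < B.merges.length), s < t →
      ¬ BPE.PairAdj (B.merges[s]'hs).1 (B.merges[s]'hs).2.1
        (A ++ (B.merges[t]'ht).2.2 :: C) := by
  intro s hs hst hadj
  obtain ⟨hl, hr⟩ := hNF.output_ne_inputs_of_lt hs ht hst
  subst hT
  rcases hadj.left_or_right_of_append_cons hl hr with hA | hC
  · exact hsmall s hs hst (hA.mono List.infix_append_left)
  · exact hsmall s hs hst
      (hC.mono ((List.infix_append_right (l₁ := [_, _])).trans List.infix_append_right))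
end
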